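/- arXiv:1909.08324 — 4 statements merged into one kernel-verified Lean document; each statement's English description precedes it below -/
import Mathlib

section
/- Let (T_t)_{t≥0} be a sublinear Markov semigroup on H with strong infinitesimal generator (A, D(A)), where f ∈ D(A) means (T_t f − f)/t converges uniformly to Af ∈ H as t ↓ 0. Then for every f ∈ D(A) and every t ≥ 0: limsup_{s→0} (T_{t+s} f − T_t f)/s ≤ T_t(Af) and liminf_{s→0} (T_{t+s} f − T_t f)/s ≥ −T_t(−Af), pointwise on R^d. -/
/-!
Sublinearity and monotonicity make each `T r` non-expansive from above: `T a - T b ≤ T (a - b)`,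
and `g ≤ h + c` gives `T g ≤ T h + c`. Hence the uniform bound `T s f - f ≤ s • (Af + ε)`
propagates to `T (r + s) f - T r f ≤ s • (T r Af + ε)` for every `r ≥ 0`, which bounds the right
difference quotients at `t`. A left quotient at `t` is a right one at `r = t - u`, so one also
needs `T r Af ≤ T t Af + 4ε`, i.e. `Af ≤ T u Af + 4ε` for small `u`; this comes from comparing
`T (u + σ) f - T u f`, for a fixed small `σ`, with the propagated bound and with the generator
bound at the times `u` and `u + σ`. The lower bound is the same argument for the orbit
`r ↦ -T r f`, whose derivative is `-Af`.
-/

open Filter Topology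

variable {X : Type*}

def submoduleOfSMulAddSMulMem (H : Set (X → ℝ)) (hzero : (0 : X → ℝ) ∈ H)
    (hcomb : ∀ f ∈ H, ∀ g ∈ H, ∀ a b : ℝ, a • f + b • g ∈ H) : Submodule ℝ (X → ℝ) where
  carrier := H
  add_mem' {f g} hf hg := by simpa using hcomb f hf g hg 1 1
  zero_mem' := hzero
  smul_mem' a f hf := by simpa using hcomb f hf f hf a 0

structure IsSublinearMarkovOperator (H : Submodule ℝ (X → ℝ)) (P : (X → ℝ) → X → ℝ) : Prop where
  one_mem : (1 : X → ℝ) ∈ H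
  map_add_le : ∀ f ∈ H, ∀ g ∈ H, P (f + g) ≤ P f + P g
  map_smul_of_nonneg : ∀ f ∈ H, ∀ c : ℝ, 0 ≤ c → P (c • f) = c • P f
  monotoneOn : MonotoneOn P H
  map_one_le : P 1 ≤ 1

namespace IsSublinearMarkovOperator

variable {H : Submodule ℝ (X → ℝ)} {P : (X → ℝ) → X → ℝ}

theorem const_mem (hP : IsSublinearMarkovOperator H P) (c : ℝ) : Function.const X c ∈ H := by
  convert H.smul_mem c hP.one_mem using 1
  ext; simp

theorem map_const_le (hP : IsSublinearMarkovOperator H P) {c : ℝ} (hc : 0 ≤ c) :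
    P (Function.const X c) ≤ Function.const X c := by
  have hconst : Function.const X c = c • (1 : X → ℝ) := by ext; simp
  rw [hconst, hP.map_smul_of_nonneg 1 hP.one_mem c hc]
  exact smul_le_smul_of_nonneg_left hP.map_one_le hc

theorem map_le_map_add_const (hP : IsSublinearMarkovOperator H P) {g h : X → ℝ} (hg : g ∈ H)
    (hh : h ∈ H) {c : ℝ} (hc : 0 ≤ c) (hgh : g ≤ h + Function.const X c) :
    P g ≤ P h + Function.const X c :=
  calc P g ≤ P (h + Function.const X c) :=
        hP.monotoneOn hg (H.add_mem hh (hP.const_mem c)) hgh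
    _ ≤ P h + P (Function.const X c) := hP.map_add_le h hh _ (hP.const_mem c)
    _ ≤ P h + Function.const X c := add_le_add_right (hP.map_const_le hc) _

theorem map_sub_map_le (hP : IsSublinearMarkovOperator H P) {g h : X → ℝ} (hg : g ∈ H)
    (hh : h ∈ H) : P g - P h ≤ P (g - h) := by
  have h_add := hP.map_add_le (g - h) (H.sub_mem hg hh) h hh
  rw [sub_add_cancel] at h_add
  exact sub_le_iff_le_add.mpr h_add

theorem map_sub_map_le_smul (hP : IsSublinearMarkovOperator H P) {a b k : X → ℝ} (ha : a ∈ H)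
    (hb : b ∈ H) (hk : k ∈ H) {s ε : ℝ} (hs : 0 ≤ s) (hε : 0 ≤ ε)
    (hab : a - b ≤ s • (k + Function.const X ε)) :
    P a - P b ≤ s • (P k + Function.const X ε) := by
  have smul_add_const : ∀ u : X → ℝ,
      s • (u + Function.const X ε) = s • u + Function.const X (s * ε) := by
    intro u; ext; simp [mul_add]
  rw [smul_add_const] at hab ⊢
  calc P a - P b ≤ P (a - b) := hP.map_sub_map_le ha hb
    _ ≤ P (s • k) + Function.const X (s * ε) :=
        hP.map_le_map_add_const (H.sub_mem ha hb) (H.smul_mem s hk) (mul_nonneg hs hε) hab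
    _ = s • P k + Function.const X (s * ε) := by rw [hP.map_smul_of_nonneg k hk s hs]

end IsSublinearMarkovOperator

structure IsSublinearMarkovSemigroup (H : Submodule ℝ (X → ℝ)) (T : ℝ → (X → ℝ) → X → ℝ) :
    Prop where
  isSublinearMarkovOperator : ∀ t, 0 ≤ t → IsSublinearMarkovOperator H (T t)
  mapsTo : ∀ t, 0 ≤ t → Set.MapsTo (T t) H H
  map_add : ∀ t, 0 ≤ t → ∀ s, 0 ≤ s → ∀ f ∈ H, T (t + s) f = T t (T s f)

theorem mul_sub_le_sub_and_sub_le_mul_add_of_abs_div_sub_le {a b c s ε : ℝ} (hs : 0 < s)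
    (h : |(a - b) / s - c| ≤ ε) : s * (c - ε) ≤ a - b ∧ a - b ≤ s * (c + ε) := by
  obtain ⟨h_lower, h_upper⟩ := abs_le.mp h
  constructor
  · rw [← le_div_iff₀' hs]; linarith
  · rw [← div_le_iff₀' hs]; linarith

namespace IsSublinearMarkovSemigroup

variable {H : Submodule ℝ (X → ℝ)} {T : ℝ → (X → ℝ) → X → ℝ}

theorem map_add_sub_map_le (hT : IsSublinearMarkovSemigroup H T) {f k : X → ℝ} (hf : f ∈ H)
    (hk : k ∈ H) {r s ε : ℝ} (hr : 0 ≤ r) (hs : 0 < s) (hε : 0 ≤ ε)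
    (h : ∀ x, |(T s f x - f x) / s - k x| ≤ ε) (x : X) :
    T (r + s) f x - T r f x ≤ s * (T r k x + ε) := by
  have hTs : T s f - f ≤ s • (k + Function.const X ε) := fun y => by
    simpa using (mul_sub_le_sub_and_sub_le_mul_add_of_abs_div_sub_le hs (h y)).2
  rw [hT.map_add r hr s hs.le f hf]
  simpa using (hT.isSublinearMarkovOperator r hr).map_sub_map_le_smul
    (hT.mapsTo s hs.le hf) hf hk hs.le hε hTs x

theorem map_sub_map_add_le (hT : IsSublinearMarkovSemigroup H T) {f k : X → ℝ} (hf : f ∈ H)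
    (hk : k ∈ H) {r s ε : ℝ} (hr : 0 ≤ r) (hs : 0 < s) (hε : 0 ≤ ε)
    (h : ∀ x, |(T s f x - f x) / s - k x| ≤ ε) (x : X) :
    T r f x - T (r + s) f x ≤ s * (T r (-k) x + ε) := by
  have hTs : f - T s f ≤ s • (-k + Function.const X ε) := fun y => by
    have := (mul_sub_le_sub_and_sub_le_mul_add_of_abs_div_sub_le hs (h y)).1
    simp only [Pi.sub_apply, Pi.smul_apply, Pi.add_apply, Pi.neg_apply, Function.const_apply,
      smul_eq_mul]
    linarith
  rw [hT.map_add r hr s hs.le f hf]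
  simpa using (hT.isSublinearMarkovOperator r hr).map_sub_map_le_smul
    hf (hT.mapsTo s hs.le hf) (H.neg_mem hk) hs.le hε hTs x

theorem map_le_map_add_add_const (hT : IsSublinearMarkovSemigroup H T) {g : X → ℝ} (hg : g ∈ H)
    {r u c : ℝ} (hr : 0 ≤ r) (hu : 0 ≤ u) (hc : 0 ≤ c) (hgu : g ≤ T u g + Function.const X c) :
    T r g ≤ T (r + u) g + Function.const X c := by
  rw [hT.map_add r hr u hu g hg]
  exact (hT.isSublinearMarkovOperator r hr).map_le_map_add_const hg (hT.mapsTo u hu hg) hc hgu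

end IsSublinearMarkovSemigroup

section Orbit

variable {T : ℝ → (X → ℝ) → X → ℝ} {φ : ℝ → X → ℝ} {f₀ g : X → ℝ} {ε δ : ℝ}

theorem le_map_add_const_of_orbit (hε : 0 ≤ ε)
    (hderiv : ∀ s, 0 < s → s < δ → ∀ x, |(φ s x - f₀ x) / s - g x| ≤ ε)
    (hincr : ∀ r, 0 ≤ r → ∀ s, 0 < s → s < δ → ∀ x, φ (r + s) x - φ r x ≤ s * (T r g x + ε))
    {u : ℝ} (hu : 0 < u) (huδ : u < δ / 2) : g ≤ T u g + Function.const X (4 * ε) := by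
  intro x
  have h_incr := hincr u hu.le (δ / 2) (by linarith) (by linarith) x
  have h_far := (mul_sub_le_sub_and_sub_le_mul_add_of_abs_div_sub_le (by linarith)
    (hderiv (u + δ / 2) (by linarith) (by linarith) x)).1
  have h_near := (mul_sub_le_sub_and_sub_le_mul_add_of_abs_div_sub_le hu
    (hderiv u hu (by linarith) x)).2
  have h_scaled : δ / 2 * g x ≤ δ / 2 * (T u g x + 4 * ε) := by
    linarith [mul_le_mul_of_nonneg_right huδ.le hε]
  simpa using le_of_mul_le_mul_left h_scaled (by linarith)

theorem IsSublinearMarkovSemigroup.div_le_of_orbit {H : Submodule ℝ (X → ℝ)}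
    (hT : IsSublinearMarkovSemigroup H T) (hg : g ∈ H) (hε : 0 ≤ ε)
    (hderiv : ∀ s, 0 < s → s < δ → ∀ x, |(φ s x - f₀ x) / s - g x| ≤ ε)
    (hincr : ∀ r, 0 ≤ r → ∀ s, 0 < s → s < δ → ∀ x, φ (r + s) x - φ r x ≤ s * (T r g x + ε))
    {t s : ℝ} (ht : 0 ≤ t) (hs : s ≠ 0) (hts : 0 ≤ t + s) (hsδ : |s| < δ / 2) (x : X) :
    (φ (t + s) x - φ t x) / s ≤ T t g x + 5 * ε := by
  rcases hs.lt_or_gt with hneg | hpos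
  · rw [abs_of_neg hneg] at hsδ
    have hu : 0 < -s := neg_pos.mpr hneg
    have h_shift : T (t + s) g x ≤ T t g x + 4 * ε := by
      simpa using hT.map_le_map_add_add_const hg hts hu.le (by positivity)
        (le_map_add_const_of_orbit hε hderiv hincr hu hsδ) x
    have h_incr := hincr (t + s) hts (-s) hu (by linarith) x
    rw [add_neg_cancel_right] at h_incr
    rw [div_le_iff_of_neg hneg]
    have h_bound : T (t + s) g x + ε ≤ T t g x + 5 * ε := by linarith
    linarith [mul_le_mul_of_nonneg_left h_bound hu.le]
  · rw [abs_of_pos hpos] at hsδ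
    have h_incr := hincr t ht s hpos (by linarith) x
    rw [div_le_iff₀ hpos]
    linarith [mul_le_mul_of_nonneg_left (by linarith : ε ≤ 5 * ε) hpos.le]

theorem IsSublinearMarkovSemigroup.eventually_div_le_of_orbit {H : Submodule ℝ (X → ℝ)}
    (hT : IsSublinearMarkovSemigroup H T) (hg : g ∈ H)
    (hderiv : ∀ ε > 0, ∃ δ > 0, ∀ s, 0 < s → s < δ → ∀ x, |(φ s x - f₀ x) / s - g x| ≤ ε)
    (hincr : ∀ ε > 0, ∃ δ > 0, ∀ r, 0 ≤ r → ∀ s, 0 < s → s < δ → ∀ x,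
      φ (r + s) x - φ r x ≤ s * (T r g x + ε))
    {t : ℝ} (ht : 0 ≤ t) (x : X) {η : ℝ} (hη : 0 < η) :
    ∀ᶠ s in 𝓝[{s : ℝ | s ≠ 0 ∧ 0 ≤ t + s}] 0, (φ (t + s) x - φ t x) / s ≤ T t g x + η := by
  obtain ⟨δ₁, hδ₁, h_deriv⟩ := hderiv (η / 5) (by positivity)
  obtain ⟨δ₂, hδ₂, h_incr⟩ := hincr (η / 5) (by positivity)
  have h_small : ∀ᶠ s in 𝓝 (0 : ℝ), |s| < min δ₁ δ₂ / 2 := by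
    simpa using eventually_abs_sub_lt (0 : ℝ) (by positivity : 0 < min δ₁ δ₂ / 2)
  filter_upwards [self_mem_nhdsWithin, nhdsWithin_le_nhds h_small] with s ⟨hs, hts⟩ hsδ
  have h_div := hT.div_le_of_orbit hg (by positivity : 0 ≤ η / 5)
    (fun s hs hsδ => h_deriv s hs (hsδ.trans_le (min_le_left _ _)))
    (fun r hr s hs hsδ => h_incr r hr s hs (hsδ.trans_le (min_le_right _ _))) ht hs hts hsδ x
  linarith

end Orbit

namespace IsSublinearMarkovSemigroup

variable {H : Submodule ℝ (X → ℝ)} {T : ℝ → (X → ℝ) → X → ℝ} {f k : X → ℝ}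

theorem eventually_div_le (hT : IsSublinearMarkovSemigroup H T) (hf : f ∈ H) (hk : k ∈ H)
    (hgen : ∀ ε > 0, ∃ δ > 0, ∀ s, 0 < s → s < δ → ∀ x, |(T s f x - f x) / s - k x| ≤ ε)
    {t : ℝ} (ht : 0 ≤ t) (x : X) {η : ℝ} (hη : 0 < η) :
    ∀ᶠ s in 𝓝[{s : ℝ | s ≠ 0 ∧ 0 ≤ t + s}] 0, (T (t + s) f x - T t f x) / s ≤ T t k x + η := by
  refine hT.eventually_div_le_of_orbit hk hgen (fun ε hε => ?_) ht x hη
  obtain ⟨δ, hδ, h⟩ := hgen ε hε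
  exact ⟨δ, hδ, fun r hr s hs hsδ => hT.map_add_sub_map_le hf hk hr hs hε.le (h s hs hsδ)⟩

theorem eventually_le_div (hT : IsSublinearMarkovSemigroup H T) (hf : f ∈ H) (hk : k ∈ H)
    (hgen : ∀ ε > 0, ∃ δ > 0, ∀ s, 0 < s → s < δ → ∀ x, |(T s f x - f x) / s - k x| ≤ ε)
    {t : ℝ} (ht : 0 ≤ t) (x : X) {η : ℝ} (hη : 0 < η) :
    ∀ᶠ s in 𝓝[{s : ℝ | s ≠ 0 ∧ 0 ≤ t + s}] 0, -T t (-k) x - η ≤ (T (t + s) f x - T t f x) / s := by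
  have hderiv_neg : ∀ ε > 0, ∃ δ > 0, ∀ s, 0 < s → s < δ → ∀ x,
      |((-T s f) x - (-f) x) / s - (-k) x| ≤ ε := by
    intro ε hε
    obtain ⟨δ, hδ, h⟩ := hgen ε hε
    refine ⟨δ, hδ, fun s hs hsδ x => ?_⟩
    rw [← abs_neg]
    convert h s hs hsδ x using 2
    simp only [Pi.neg_apply]
    ring
  have hincr_neg : ∀ ε > 0, ∃ δ > 0, ∀ r, 0 ≤ r → ∀ s, 0 < s → s < δ → ∀ x,
      (-T (r + s) f) x - (-T r f) x ≤ s * (T r (-k) x + ε) := by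
    intro ε hε
    obtain ⟨δ, hδ, h⟩ := hgen ε hε
    refine ⟨δ, hδ, fun r hr s hs hsδ x => ?_⟩
    simp only [Pi.neg_apply]
    linarith [hT.map_sub_map_add_le hf hk hr hs hε.le (h s hs hsδ) x]
  filter_upwards [hT.eventually_div_le_of_orbit (φ := fun r => -T r f) (H.neg_mem hk)
    hderiv_neg hincr_neg ht x hη] with s hs
  simp only [Pi.neg_apply] at hs
  rw [neg_sub_neg, ← neg_sub, neg_div] at hs
  linarith

end IsSublinearMarkovSemigroup

theorem limsup_le_and_le_liminf_of_forall_pos {α : Type*} {l : Filter α} [l.NeBot] {u : α → ℝ}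
    {a b : ℝ} (hle : ∀ ε > 0, ∀ᶠ y in l, u y ≤ a + ε) (hge : ∀ ε > 0, ∀ᶠ y in l, b - ε ≤ u y) :
    limsup u l ≤ a ∧ b ≤ liminf u l := by
  have h_above : IsBoundedUnder (· ≤ ·) l u := ⟨a + 1, eventually_map.2 (hle 1 one_pos)⟩
  have h_below : IsBoundedUnder (· ≥ ·) l u := ⟨b - 1, eventually_map.2 (hge 1 one_pos)⟩
  constructor
  · exact le_of_forall_pos_le_add fun ε hε =>
      limsup_le_of_le h_below.isCoboundedUnder_le (hle ε hε)
  · refine le_of_forall_pos_le_add fun ε hε => ?_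
    have := le_liminf_of_le h_above.isCoboundedUnder_ge (hge ε hε)
    linarith

theorem sublinear_semigroup_time_derivative_bounds_general
    {d : ℕ} (H : Set ((Fin d → ℝ) → ℝ))
    (T : ℝ → ((Fin d → ℝ) → ℝ) → ((Fin d → ℝ) → ℝ))
    (hconst : ∀ c : ℝ, (fun _ => c) ∈ H)
    (hcone : ∀ f ∈ H, ∀ g ∈ H, ∀ a b : ℝ, a • f + b • g ∈ H)
    (hmap : ∀ t, 0 ≤ t → ∀ f ∈ H, T t f ∈ H)
    (hsemi : ∀ t, 0 ≤ t → ∀ s, 0 ≤ s → ∀ f ∈ H, T (t + s) f = T t (T s f))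
    (hsub : ∀ t, 0 ≤ t → ∀ f ∈ H, ∀ g ∈ H, ∀ x, T t (f + g) x ≤ T t f x + T t g x)
    (hhom : ∀ t, 0 ≤ t → ∀ f ∈ H, ∀ c : ℝ, 0 ≤ c → T t (c • f) = c • T t f)
    (hmono : ∀ t, 0 ≤ t → ∀ f ∈ H, ∀ g ∈ H, (∀ x, f x ≤ g x) → ∀ x, T t f x ≤ T t g x)
    (hone : ∀ t, 0 ≤ t → ∀ x, T t (fun _ => (1 : ℝ)) x ≤ 1)
    -- f is in the domain of the strong generator, with Af the strong (uniform) limit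
    (f : (Fin d → ℝ) → ℝ) (hf : f ∈ H) (Af : (Fin d → ℝ) → ℝ) (hAf : Af ∈ H)
    (hgen : ∀ ε > (0 : ℝ), ∃ δ > (0 : ℝ), ∀ s, 0 < s → s < δ →
      ∀ x, |(T s f x - f x) / s - Af x| ≤ ε) :
    ∀ t, 0 ≤ t → ∀ x,
      limsup (fun s => (T (t + s) f x - T t f x) / s)
          (𝓝[{s : ℝ | s ≠ 0 ∧ 0 ≤ t + s}] 0) ≤ T t Af x ∧
      -(T t (-Af) x) ≤ liminf (fun s => (T (t + s) f x - T t f x) / s)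
          (𝓝[{s : ℝ | s ≠ 0 ∧ 0 ≤ t + s}] 0) := by
  have hT : IsSublinearMarkovSemigroup (submoduleOfSMulAddSMulMem H (hconst 0) hcone) T :=
    { isSublinearMarkovOperator := fun t ht =>
        { one_mem := hconst 1
          map_add_le := hsub t ht
          map_smul_of_nonneg := hhom t ht
          monotoneOn := fun f hf g hg hfg => hmono t ht f hf g hg hfg
          map_one_le := hone t ht }
      mapsTo := fun t ht _ hf => hmap t ht _ hf
      map_add := hsemi }
  intro t ht x
  have : (𝓝[{s : ℝ | s ≠ 0 ∧ 0 ≤ t + s}] (0 : ℝ)).NeBot :=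
    neBot_of_le (f := 𝓝[>] 0) (nhdsWithin_mono 0 fun s (hs : 0 < s) => ⟨hs.ne', by linarith⟩)
  exact limsup_le_and_le_liminf_of_forall_pos
    (fun η hη => hT.eventually_div_le hf hAf hgen ht x hη)
    (fun η hη => hT.eventually_le_div hf hAf hgen ht x hη)

/-- for `f` in the domain of the strong generator `A` of a sublinear Markov
semigroup, `-T_t(-Af) ≤ liminf_{s→0} (T_{t+s}f - T_t f)/s ≤ limsup_{s→0} (T_{t+s}f - T_t f)/s
≤ T_t(Af)` pointwise, for every `t ≥ 0`. -/
theorem sublinear_semigroup_time_derivative_bounds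
    {d : ℕ} (H : Set ((Fin d → ℝ) → ℝ))
    (T : ℝ → ((Fin d → ℝ) → ℝ) → ((Fin d → ℝ) → ℝ))
    (hbd : ∀ f ∈ H, ∃ C, ∀ x, |f x| ≤ C)
    (hconst : ∀ c : ℝ, (fun _ => c) ∈ H)
    (hcone : ∀ f ∈ H, ∀ g ∈ H, ∀ a b : ℝ, a • f + b • g ∈ H)
    (hmap : ∀ t, 0 ≤ t → ∀ f ∈ H, T t f ∈ H)
    (hsemi : ∀ t, 0 ≤ t → ∀ s, 0 ≤ s → ∀ f ∈ H, T (t + s) f = T t (T s f))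
    (hid : ∀ f ∈ H, T 0 f = f)
    (hsub : ∀ t, 0 ≤ t → ∀ f ∈ H, ∀ g ∈ H, ∀ x, T t (f + g) x ≤ T t f x + T t g x)
    (hhom : ∀ t, 0 ≤ t → ∀ f ∈ H, ∀ c : ℝ, 0 ≤ c → T t (c • f) = c • T t f)
    (hmono : ∀ t, 0 ≤ t → ∀ f ∈ H, ∀ g ∈ H, (∀ x, f x ≤ g x) → ∀ x, T t f x ≤ T t g x)
    (hone : ∀ t, 0 ≤ t → ∀ x, T t (fun _ => (1 : ℝ)) x ≤ 1)
    -- f is in the domain of the strong generator, with Af the strong (uniform) limit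
    (f : (Fin d → ℝ) → ℝ) (hf : f ∈ H) (Af : (Fin d → ℝ) → ℝ) (hAf : Af ∈ H)
    (hgen : ∀ ε > (0 : ℝ), ∃ δ > (0 : ℝ), ∀ s, 0 < s → s < δ →
      ∀ x, |(T s f x - f x) / s - Af x| ≤ ε) :
    ∀ t, 0 ≤ t → ∀ x,
      limsup (fun s => (T (t + s) f x - T t f x) / s)
          (𝓝[{s : ℝ | s ≠ 0 ∧ 0 ≤ t + s}] 0) ≤ T t Af x ∧
      -(T t (-Af) x) ≤ liminf (fun s => (T (t + s) f x - T t f x) / s)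
          (𝓝[{s : ℝ | s ≠ 0 ∧ 0 ≤ t + s}] 0) :=
  sublinear_semigroup_time_derivative_bounds_general H T hconst hcone hmap hsemi hsub hhom hmono
    hone f hf Af hAf hgen
end

section
/- Sublinear Dynkin formula: Let (T_t)_{t≥0} be a sublinear Markov semigroup on H with strong infinitesimal generator (A, D(A)). Then for every f ∈ D(A) and t ≥ 0, pointwise on R^d: −∫_0^t T_s(−Af) ds ≤ T_t f − f ≤ ∫_0^t T_s(Af) ds. -/
/-!
Subadditivity, monotonicity and `T t 1 ≤ 1` make each `T s` a sup-norm contraction that can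
absorb additive constants, so the generator estimate `T h f ≈ f + h • Af` can be pushed through
`T s`: `T (s + h) f - T s f ≤ T s (T h f - f) ≲ h * T s Af`. Summing these increments and
comparing with the integral needs `s ↦ T s Af x` to be right lower semicontinuous, uniformly in
`s`; by the semigroup property this reduces to `Af ≤ T h Af + ε` for small `h`. Right lower
semicontinuity also gives measurability, since superlevel sets are open up to a countable set.
The lower bound is the same argument applied to `f - T h f ≲ h • (-Af)`.
-/

open Filter Topology MeasureTheory intervalIntegral Set

theorem MeasurableSet.of_forall_exists_Ioo_subset {α : Type*} [LinearOrder α]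
    [TopologicalSpace α] [OrderTopology α] [SecondCountableTopology α] [MeasurableSpace α]
    [OpensMeasurableSpace α] {S : Set α} (h : ∀ u ∈ S, ∃ v > u, Ioo u v ⊆ S) :
    MeasurableSet S := by
  have hcount : (S \ interior S).Countable := by
    refine (countable_setOfPred_isolated_right_within (s := S \ interior S)).mono
      fun u hu => mem_sep hu ?_
    obtain ⟨v, huv, hsub⟩ := h u hu.1
    rw [← empty_mem_iff_bot, mem_nhdsWithin]
    refine ⟨Iio v, isOpen_Iio, huv, fun r hr => hr.2.1.2 ?_⟩
    exact interior_maximal hsub isOpen_Ioo ⟨hr.2.2, hr.1⟩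
  rw [← union_sdiff_cancel (interior_subset (s := S))]
  exact isOpen_interior.measurableSet.union hcount.measurableSet

theorem measurable_of_forall_lowerSemicontinuousWithinAt_Ioi {α β : Type*} [LinearOrder α]
    [TopologicalSpace α] [OrderTopology α] [SecondCountableTopology α] [NoMaxOrder α]
    [MeasurableSpace α] [OpensMeasurableSpace α] [LinearOrder β] [TopologicalSpace β]
    [OrderTopology β] [SecondCountableTopology β] [MeasurableSpace β] [BorelSpace β]
    {Φ : α → β} (h : ∀ u, LowerSemicontinuousWithinAt Φ (Ioi u) u) : Measurable Φ :=
  measurable_of_Ioi fun a => .of_forall_exists_Ioo_subset fun u hu =>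
    mem_nhdsGT_iff_exists_Ioo_subset.1 (h u a hu)

theorem intervalIntegrable_of_lowerSemicontinuousWithinAt_Ioi {Φ : ℝ → ℝ} {C t : ℝ}
    (ht : 0 ≤ t) (hb : ∀ s, 0 ≤ s → |Φ s| ≤ C)
    (hΦ : ∀ s, 0 ≤ s → LowerSemicontinuousWithinAt Φ (Ioi s) s) :
    IntervalIntegrable Φ volume 0 t := by
  -- `Φ` is only controlled on `[0, ∞)`, so freeze it on `(-∞, 0]` before proving measurability.
  set Ψ : ℝ → ℝ := fun s => Φ (max s 0)
  have hΨ : Measurable Ψ := measurable_of_forall_lowerSemicontinuousWithinAt_Ioi fun u y hy => by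
    rcases lt_or_ge u 0 with hu | hu
    · filter_upwards [nhdsWithin_le_nhds (Iio_mem_nhds hu)] with r hr
      simpa only [Ψ, max_eq_right (mem_Iio.1 hr).le, max_eq_right hu.le] using hy
    · filter_upwards [hΦ u hu y (by simpa only [Ψ, max_eq_left hu] using hy),
        self_mem_nhdsWithin] with r hr hur
      simpa only [Ψ, max_eq_left (hu.trans (le_of_lt hur))] using hr
  have hΨint : IntegrableOn Ψ (Ioc 0 t) :=
    Measure.integrableOn_of_bounded measure_Ioc_lt_top.ne hΨ.aestronglyMeasurable
      (M := C) (Eventually.of_forall fun s => hb _ (le_max_right s 0))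
  exact (intervalIntegrable_iff_integrableOn_Ioc_of_le ht).2 <|
    hΨint.congr_fun (fun s hs => by simp only [Ψ, max_eq_left hs.1.le]) measurableSet_Ioc

theorem le_of_forall_le_add_of_lt {G : ℝ → ℝ} {a b δ : ℝ} (hδ : 0 < δ) (hab : a ≤ b)
    (hstep : ∀ s h, a ≤ s → 0 < h → h < δ → s + h ≤ b → G s ≤ G (s + h)) : G a ≤ G b := by
  rcases hab.eq_or_lt with rfl | hab
  · rfl
  obtain ⟨n, hn⟩ := exists_nat_gt ((b - a) / δ)
  have hn0 : (0 : ℝ) < n := (div_pos (sub_pos.2 hab) hδ).trans hn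
  set u := (b - a) / n
  have hu : 0 < u := div_pos (sub_pos.2 hab) hn0
  have huδ : u < δ := by
    rw [div_lt_iff₀ hn0]
    rwa [div_lt_iff₀ hδ, mul_comm] at hn
  have hnu : n * u = b - a := mul_div_cancel₀ _ hn0.ne'
  have key : ∀ k : ℕ, k ≤ n → G a ≤ G (a + k * u) := by
    intro k
    induction k with
    | zero => simp
    | succ k ih =>
      intro hk
      have hkn : (k + 1 : ℝ) ≤ n := by exact_mod_cast hk
      calc G a ≤ G (a + k * u) := ih (by omega)
        _ ≤ G (a + k * u + u) :=
          hstep _ _ (le_add_of_nonneg_right (by positivity)) hu huδ (by nlinarith)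
        _ = G (a + (k + 1 : ℕ) * u) := by congr 1; push_cast; ring
  simpa [hnu] using key n le_rfl

theorem sub_le_integral_add_mul {F Φ : ℝ → ℝ} {t ε δ : ℝ} (ht : 0 ≤ t) (hε : 0 ≤ ε)
    (hδ : 0 < δ) (hint : IntervalIntegrable Φ volume 0 t)
    (hΦ : ∀ s h, 0 ≤ s → 0 < h → h < δ → Φ s - ε ≤ Φ (s + h))
    (hF : ∀ s h, 0 ≤ s → 0 < h → h < δ → F (s + h) - F s ≤ h * (Φ s + ε)) :
    F t - F 0 ≤ (∫ s in 0..t, Φ s) + 2 * ε * t := by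
  set G : ℝ → ℝ := fun τ => (∫ s in 0..τ, Φ s) + 2 * ε * τ - (F τ - F 0)
  suffices G 0 ≤ G t by
    simp only [G, integral_same, mul_zero, sub_self] at this
    linarith
  refine le_of_forall_le_add_of_lt hδ ht fun s h hs hh hhδ hst => ?_
  have hint_s : IntervalIntegrable Φ volume s (s + h) :=
    hint.mono_set (by rw [uIcc_of_le ht, uIcc_of_le (by linarith)]; exact Icc_subset_Icc hs hst)
  have hint_0 : IntervalIntegrable Φ volume 0 s :=
    hint.mono_set <| by
      rw [uIcc_of_le ht, uIcc_of_le hs]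
      exact Icc_subset_Icc le_rfl (by linarith)
  have hlow : h * (Φ s - ε) ≤ ∫ r in s..s + h, Φ r := by
    calc h * (Φ s - ε) = ∫ _ in s..s + h, (Φ s - ε) := by simp [mul_sub]
      _ ≤ ∫ r in s..s + h, Φ r := by
        refine integral_mono_on (by linarith) intervalIntegrable_const hint_s fun r hr => ?_
        rcases hr.1.eq_or_lt with rfl | hsr
        · linarith
        · simpa using hΦ s (r - s) hs (by linarith) (by linarith [hr.2])
  simp only [G, ← integral_add_adjacent_intervals hint_0 hint_s]
  linarith [hF s h hs hh hhδ]

theorem sub_le_integral_of_forall_sub_le_mul {F Φ : ℝ → ℝ} {C t : ℝ} (ht : 0 ≤ t)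
    (hb : ∀ s, 0 ≤ s → |Φ s| ≤ C)
    (hΦ : ∀ ε > 0, ∃ δ > 0, ∀ s h, 0 ≤ s → 0 < h → h < δ → Φ s - ε ≤ Φ (s + h))
    (hF : ∀ ε > 0, ∃ δ > 0, ∀ s h, 0 ≤ s → 0 < h → h < δ → F (s + h) - F s ≤ h * (Φ s + ε)) :
    F t - F 0 ≤ ∫ s in 0..t, Φ s := by
  have hint : IntervalIntegrable Φ volume 0 t := by
    refine intervalIntegrable_of_lowerSemicontinuousWithinAt_Ioi ht hb fun s hs y hy => ?_
    obtain ⟨δ, hδ, hδΦ⟩ := hΦ ((Φ s - y) / 2) (by linarith)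
    filter_upwards [Ioo_mem_nhdsGT (by linarith : s < s + δ)] with r hr
    have := hδΦ s (r - s) hs (by linarith [hr.1]) (by linarith [hr.2])
    rw [add_sub_cancel] at this
    linarith
  refine le_of_forall_pos_le_add fun ε hε => ?_
  set ε' := ε / (2 * (t + 1))
  obtain ⟨δ₁, hδ₁, hδΦ⟩ := hΦ ε' (by positivity)
  obtain ⟨δ₂, hδ₂, hδF⟩ := hF ε' (by positivity)
  calc F t - F 0 ≤ (∫ s in 0..t, Φ s) + 2 * ε' * t :=
        sub_le_integral_add_mul ht (by positivity) (lt_min hδ₁ hδ₂) hint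
          (fun s h hs hh hhδ => hδΦ s h hs hh (hhδ.trans_le (min_le_left _ _)))
          (fun s h hs hh hhδ => hδF s h hs hh (hhδ.trans_le (min_le_right _ _)))
    _ ≤ (∫ s in 0..t, Φ s) + ε := by
      rw [show 2 * ε' * t = ε * (t / (t + 1)) by simp only [ε']; field_simp]
      gcongr
      exact mul_le_of_le_one_right hε.le ((div_le_one (by linarith)).2 (by linarith))

theorem neg_integral_le_sub_of_forall_sub_le_mul {F Φ : ℝ → ℝ} {C t : ℝ} (ht : 0 ≤ t)
    (hb : ∀ s, 0 ≤ s → |Φ s| ≤ C)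
    (hΦ : ∀ ε > 0, ∃ δ > 0, ∀ s h, 0 ≤ s → 0 < h → h < δ → Φ s - ε ≤ Φ (s + h))
    (hF : ∀ ε > 0, ∃ δ > 0, ∀ s h, 0 ≤ s → 0 < h → h < δ → F s - F (s + h) ≤ h * (Φ s + ε)) :
    -(∫ s in 0..t, Φ s) ≤ F t - F 0 := by
  have := sub_le_integral_of_forall_sub_le_mul (F := -F) ht hb hΦ fun ε hε => by
    simpa only [Pi.neg_apply, neg_sub_neg] using hF ε hε
  simp only [Pi.neg_apply, neg_sub_neg] at this
  linarith

structure IsSublinearMarkovSemigroup_s4 {X : Type*} (H : Set (X → ℝ))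
    (T : ℝ → (X → ℝ) → (X → ℝ)) : Prop where
  bounded : ∀ f ∈ H, ∃ C, ∀ x, |f x| ≤ C
  const_mem : ∀ c : ℝ, (fun _ => c) ∈ H
  smul_add_smul_mem : ∀ f ∈ H, ∀ g ∈ H, ∀ a b : ℝ, a • f + b • g ∈ H
  apply_mem : ∀ t, 0 ≤ t → ∀ f ∈ H, T t f ∈ H
  add_apply : ∀ t, 0 ≤ t → ∀ s, 0 ≤ s → ∀ f ∈ H, T (t + s) f = T t (T s f)
  zero_apply : ∀ f ∈ H, T 0 f = f
  apply_add_le : ∀ t, 0 ≤ t → ∀ f ∈ H, ∀ g ∈ H, ∀ x, T t (f + g) x ≤ T t f x + T t g x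
  apply_smul : ∀ t, 0 ≤ t → ∀ f ∈ H, ∀ c : ℝ, 0 ≤ c → T t (c • f) = c • T t f
  apply_mono : ∀ t, 0 ≤ t → ∀ f ∈ H, ∀ g ∈ H, (∀ x, f x ≤ g x) → ∀ x, T t f x ≤ T t g x
  apply_one_le : ∀ t, 0 ≤ t → ∀ x, T t (fun _ => (1 : ℝ)) x ≤ 1

def HasStrongGenerator {X : Type*} (T : ℝ → (X → ℝ) → (X → ℝ)) (f Af : X → ℝ) : Prop :=
  ∀ ε > (0 : ℝ), ∃ δ > (0 : ℝ), ∀ s, 0 < s → s < δ → ∀ x, |(T s f x - f x) / s - Af x| ≤ ε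

namespace HasStrongGenerator

variable {X : Type*} {T : ℝ → (X → ℝ) → (X → ℝ)} {f Af : X → ℝ}

theorem exists_abs_sub_sub_mul_le (hgen : HasStrongGenerator T f Af) :
    ∀ ε > 0, ∃ δ > 0, ∀ h, 0 < h → h < δ → ∀ y, |T h f y - f y - h * Af y| ≤ h * ε := by
  intro ε hε
  obtain ⟨δ, hδ, hquot⟩ := hgen ε hε
  refine ⟨δ, hδ, fun h hh hhδ y => ?_⟩
  have hmul : T h f y - f y - h * Af y = h * ((T h f y - f y) / h - Af y) := by
    field_simp
  rw [hmul, abs_mul, abs_of_pos hh]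
  exact mul_le_mul_of_nonneg_left (hquot h hh hhδ y) hh.le

theorem exists_approx_and_abs_sub_le (hgen : HasStrongGenerator T f Af) {C : ℝ}
    (hC : ∀ y, |Af y| ≤ C) : ∀ ε > 0, ∃ v > 0, ∃ δ > 0,
      (∀ y, |T v f y - f y - v * Af y| ≤ v * ε) ∧
      ∀ h, 0 < h → h < δ → ∀ y, |T h f y - f y| ≤ v * ε := by
  intro ε hε
  obtain ⟨δ₀, hδ₀, happrox⟩ := hgen.exists_abs_sub_sub_mul_le ε hε
  obtain ⟨δ₁, hδ₁, hlip⟩ := hgen.exists_abs_sub_sub_mul_le 1 one_pos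
  set L := |C| + 1
  have hL : 0 < L := by positivity
  refine ⟨δ₀ / 2, by positivity, min δ₁ (δ₀ / 2 * ε / L), by positivity,
    fun y => happrox _ (by positivity) (by linarith) y, fun h hh hhδ y => ?_⟩
  have hhL : h * L ≤ δ₀ / 2 * ε := (le_div_iff₀ hL).1 (hhδ.le.trans (min_le_right _ _))
  calc |T h f y - f y| ≤ |T h f y - f y - h * Af y| + |h * Af y| := by
        linarith [abs_sub_abs_le_abs_sub (T h f y - f y) (h * Af y)]
    _ ≤ h * 1 + h * |C| := by
      gcongr
      · exact hlip h hh (hhδ.trans_le (min_le_left _ _)) y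
      · rw [abs_mul, abs_of_pos hh]
        exact mul_le_mul_of_nonneg_left ((hC y).trans (le_abs_self C)) hh.le
    _ = h * L := by ring
    _ ≤ δ₀ / 2 * ε := hhL

end HasStrongGenerator

namespace IsSublinearMarkovSemigroup_s4

variable {X : Type*} {H : Set (X → ℝ)} {T : ℝ → (X → ℝ) → (X → ℝ)} {t : ℝ}
  {f Af g g' G : X → ℝ}

theorem smul_mem (hT : IsSublinearMarkovSemigroup_s4 H T) (hg : g ∈ H) (a : ℝ) : a • g ∈ H := by
  simpa using hT.smul_add_smul_mem g hg g hg a 0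

theorem sub_mem (hT : IsSublinearMarkovSemigroup_s4 H T) (hg : g ∈ H) (hg' : g' ∈ H) :
    g - g' ∈ H := by
  simpa [sub_eq_add_neg] using hT.smul_add_smul_mem g hg g' hg' 1 (-1)

theorem neg_mem (hT : IsSublinearMarkovSemigroup_s4 H T) (hg : g ∈ H) : -g ∈ H := by
  simpa using hT.smul_mem hg (-1)

theorem apply_const_le (hT : IsSublinearMarkovSemigroup_s4 H T) (ht : 0 ≤ t) {c : ℝ} (hc : 0 ≤ c)
    (x : X) : T t (fun _ => c) x ≤ c := by
  have hc1 : (fun _ : X => c) = c • fun _ => (1 : ℝ) := by ext; simp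
  rw [hc1, hT.apply_smul t ht _ (hT.const_mem 1) c hc, Pi.smul_apply, smul_eq_mul]
  exact mul_le_of_le_one_right hc (hT.apply_one_le t ht x)

theorem apply_le_apply_add (hT : IsSublinearMarkovSemigroup_s4 H T) (ht : 0 ≤ t) (hg : g ∈ H)
    (hg' : g' ∈ H) {c : ℝ} (hc : 0 ≤ c) (hle : ∀ y, g y ≤ g' y + c) (x : X) :
    T t g x ≤ T t g' x + c := by
  have hmem : g' + (fun _ => c) ∈ H := by
    simpa using hT.smul_add_smul_mem g' hg' _ (hT.const_mem c) 1 1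
  calc T t g x ≤ T t (g' + fun _ => c) x := hT.apply_mono t ht g hg _ hmem hle x
    _ ≤ T t g' x + T t (fun _ => c) x := hT.apply_add_le t ht g' hg' _ (hT.const_mem c) x
    _ ≤ T t g' x + c := by grw [hT.apply_const_le ht hc x]

theorem abs_apply_sub_apply_le (hT : IsSublinearMarkovSemigroup_s4 H T) (ht : 0 ≤ t) (hg : g ∈ H)
    (hg' : g' ∈ H) {c : ℝ} (hle : ∀ y, |g y - g' y| ≤ c) (x : X) :
    |T t g x - T t g' x| ≤ c := by
  have hc : 0 ≤ c := (abs_nonneg _).trans (hle x)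
  rw [abs_sub_le_iff]
  constructor
  · linarith [hT.apply_le_apply_add ht hg hg' hc (fun y => by linarith [(abs_le.1 (hle y)).2]) x]
  · linarith [hT.apply_le_apply_add ht hg' hg hc (fun y => by linarith [(abs_le.1 (hle y)).1]) x]

theorem zero_mem (hT : IsSublinearMarkovSemigroup_s4 H T) : (0 : X → ℝ) ∈ H :=
  hT.const_mem 0

theorem apply_zero (hT : IsSublinearMarkovSemigroup_s4 H T) (ht : 0 ≤ t) : T t 0 = 0 := by
  simpa using hT.apply_smul t ht 0 hT.zero_mem 0 le_rfl

theorem abs_apply_le (hT : IsSublinearMarkovSemigroup_s4 H T) (ht : 0 ≤ t) (hg : g ∈ H) {C : ℝ}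
    (hC : ∀ y, |g y| ≤ C) (x : X) : |T t g x| ≤ C := by
  simpa [hT.apply_zero ht] using
    hT.abs_apply_sub_apply_le ht hg hT.zero_mem (fun y => by simpa using hC y) x

theorem apply_sub_apply_le (hT : IsSublinearMarkovSemigroup_s4 H T) (ht : 0 ≤ t) (hg : g ∈ H)
    (hg' : g' ∈ H) (x : X) : T t g x - T t g' x ≤ T t (g - g') x := by
  have := hT.apply_add_le t ht _ (hT.sub_mem hg hg') g' hg' x
  rw [sub_add_cancel] at this
  linarith

theorem apply_le_mul_apply_add (hT : IsSublinearMarkovSemigroup_s4 H T) (ht : 0 ≤ t) (hg : g ∈ H)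
    (hG : G ∈ H) {a c : ℝ} (ha : 0 ≤ a) (hc : 0 ≤ c) (hle : ∀ y, g y ≤ a * G y + c) (x : X) :
    T t g x ≤ a * T t G x + c := by
  simpa [hT.apply_smul t ht G hG a ha] using
    hT.apply_le_apply_add ht hg (hT.smul_mem hG a) hc hle x

theorem apply_sub_apply_le_mul_apply_add (hT : IsSublinearMarkovSemigroup_s4 H T) (ht : 0 ≤ t)
    (hg : g ∈ H) (hg' : g' ∈ H) (hG : G ∈ H) {a c : ℝ} (ha : 0 ≤ a) (hc : 0 ≤ c)
    (hle : ∀ y, g y - g' y ≤ a * G y + c) (x : X) :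
    T t g x - T t g' x ≤ a * T t G x + c :=
  (hT.apply_sub_apply_le ht hg hg' x).trans <|
    hT.apply_le_mul_apply_add ht (hT.sub_mem hg hg') hG ha hc hle x

theorem abs_apply_apply_sub_apply_le (hT : IsSublinearMarkovSemigroup_s4 H T) (hf : f ∈ H)
    {h v η : ℝ} (hh : 0 ≤ h) (hv : 0 ≤ v) (hη : ∀ y, |T h f y - f y| ≤ η) (x : X) :
    |T h (T v f) x - T v f x| ≤ η := by
  rw [← hT.add_apply h hh v hv f hf, add_comm, hT.add_apply v hv h hh f hf]
  exact hT.abs_apply_sub_apply_le hv (hT.apply_mem h hh f hf) hf hη x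

theorem sub_sub_le_apply_sub (hT : IsSublinearMarkovSemigroup_s4 H T) (hg : g ∈ H) (hg' : g' ∈ H)
    {h η : ℝ} (hh : 0 ≤ h) (hηg : ∀ y, |T h g y - g y| ≤ η) (hηg' : ∀ y, |T h g' y - g' y| ≤ η)
    (x : X) : g x - g' x - 2 * η ≤ T h (g - g') x := by
  linarith [hT.apply_sub_apply_le hh hg hg' x, (abs_le.1 (hηg x)).1, (abs_le.1 (hηg' x)).2]

theorem le_apply_add_of_abs_sub_mul_le (hT : IsSublinearMarkovSemigroup_s4 H T) (hG : G ∈ H)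
    {w : X → ℝ} (hw : w ∈ H) {h v ε η : ℝ} (hh : 0 ≤ h) (hv : 0 < v) (hε : 0 ≤ ε)
    (happrox : ∀ y, |w y - v * G y| ≤ v * ε) (hwh : ∀ y, w y - η ≤ T h w y) (x : X) :
    G x ≤ T h G x + 2 * ε + η / v := by
  have hTw := hT.apply_le_mul_apply_add (c := v * ε) hh hw hG hv.le (by positivity)
    (fun y => by linarith [(abs_le.1 (happrox y)).2]) x
  have key : v * (G x - T h G x - 2 * ε) ≤ η := by
    linarith [(abs_le.1 (happrox x)).1, hwh x]
  linarith [(le_div_iff₀' hv).2 key]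

/-- `Af` need not lie in the domain of the generator: `Af ≈ (T v f - f) / v`, and `T h` moves
both `T v f` and `f` by little. -/
theorem exists_le_apply_add (hT : IsSublinearMarkovSemigroup_s4 H T) (hf : f ∈ H) (hAf : Af ∈ H)
    (hgen : HasStrongGenerator T f Af) {C : ℝ} (hC : ∀ y, |Af y| ≤ C) :
    ∀ ε > 0, ∃ δ > 0, ∀ h, 0 < h → h < δ → ∀ y, Af y ≤ T h Af y + ε := by
  intro ε hε
  obtain ⟨v, hv, δ, hδ, happrox, hsmall⟩ :=
    hgen.exists_approx_and_abs_sub_le hC (ε / 4) (by positivity)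
  refine ⟨δ, hδ, fun h hh hhδ y => ?_⟩
  have hTvf := hT.apply_mem v hv.le f hf
  have hwh := hT.sub_sub_le_apply_sub hTvf hf hh.le
    (hT.abs_apply_apply_sub_apply_le hf hh.le hv.le (hsmall h hh hhδ)) (hsmall h hh hhδ)
  have := hT.le_apply_add_of_abs_sub_mul_le hAf (hT.sub_mem hTvf hf) hh.le hv (by positivity)
    happrox hwh y
  have hη : 2 * (v * (ε / 4)) / v = ε / 2 := by field_simp; ring
  linarith

theorem exists_neg_le_apply_neg_add (hT : IsSublinearMarkovSemigroup_s4 H T) (hf : f ∈ H)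
    (hAf : Af ∈ H) (hgen : HasStrongGenerator T f Af) {C : ℝ} (hC : ∀ y, |Af y| ≤ C) :
    ∀ ε > 0, ∃ δ > 0, ∀ h, 0 < h → h < δ → ∀ y, -Af y ≤ T h (-Af) y + ε := by
  intro ε hε
  obtain ⟨v, hv, δ, hδ, happrox, hsmall⟩ :=
    hgen.exists_approx_and_abs_sub_le hC (ε / 4) (by positivity)
  refine ⟨δ, hδ, fun h hh hhδ y => ?_⟩
  have hTvf := hT.apply_mem v hv.le f hf
  have hwh := hT.sub_sub_le_apply_sub hf hTvf hh.le
    (hsmall h hh hhδ) (hT.abs_apply_apply_sub_apply_le hf hh.le hv.le (hsmall h hh hhδ))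
  have happrox' : ∀ y, |(f - T v f) y - v * (-Af) y| ≤ v * (ε / 4) := fun y => by
    rw [← abs_neg]
    convert happrox y using 2
    simp only [Pi.sub_apply, Pi.neg_apply]
    ring
  have := hT.le_apply_add_of_abs_sub_mul_le (hT.neg_mem hAf) (hT.sub_mem hf hTvf) hh.le hv
    (by positivity) happrox' hwh y
  have hη : 2 * (v * (ε / 4)) / v = ε / 2 := by field_simp; ring
  simp only [Pi.neg_apply] at this ⊢
  linarith

theorem exists_apply_sub_le_apply_add (hT : IsSublinearMarkovSemigroup_s4 H T) (hg : g ∈ H)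
    (hsmall : ∀ ε > 0, ∃ δ > 0, ∀ h, 0 < h → h < δ → ∀ y, g y ≤ T h g y + ε) (x : X) :
    ∀ ε > 0, ∃ δ > 0, ∀ s h, 0 ≤ s → 0 < h → h < δ → T s g x - ε ≤ T (s + h) g x := by
  intro ε hε
  obtain ⟨δ, hδ, hδg⟩ := hsmall ε hε
  refine ⟨δ, hδ, fun s h hs hh hhδ => ?_⟩
  rw [hT.add_apply s hs h hh.le g hg]
  linarith [hT.apply_le_apply_add hs hg (hT.apply_mem h hh.le g hg) hε.le (hδg h hh hhδ) x]

theorem exists_apply_add_sub_apply_le (hT : IsSublinearMarkovSemigroup_s4 H T) (hf : f ∈ H)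
    (hAf : Af ∈ H) (hgen : HasStrongGenerator T f Af) (x : X) :
    ∀ ε > 0, ∃ δ > 0, ∀ s h, 0 ≤ s → 0 < h → h < δ →
      T (s + h) f x - T s f x ≤ h * (T s Af x + ε) := by
  intro ε hε
  obtain ⟨δ, hδ, happrox⟩ := hgen.exists_abs_sub_sub_mul_le ε hε
  refine ⟨δ, hδ, fun s h hs hh hhδ => ?_⟩
  rw [hT.add_apply s hs h hh.le f hf, mul_add]
  exact hT.apply_sub_apply_le_mul_apply_add hs (hT.apply_mem h hh.le f hf) hf hAf hh.le
    (by positivity) (fun y => by linarith [(abs_le.1 (happrox h hh hhδ y)).2]) x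

theorem exists_apply_sub_apply_add_le (hT : IsSublinearMarkovSemigroup_s4 H T) (hf : f ∈ H)
    (hAf : Af ∈ H) (hgen : HasStrongGenerator T f Af) (x : X) :
    ∀ ε > 0, ∃ δ > 0, ∀ s h, 0 ≤ s → 0 < h → h < δ →
      T s f x - T (s + h) f x ≤ h * (T s (-Af) x + ε) := by
  intro ε hε
  obtain ⟨δ, hδ, happrox⟩ := hgen.exists_abs_sub_sub_mul_le ε hε
  refine ⟨δ, hδ, fun s h hs hh hhδ => ?_⟩
  rw [hT.add_apply s hs h hh.le f hf, mul_add]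
  exact hT.apply_sub_apply_le_mul_apply_add hs hf (hT.apply_mem h hh.le f hf) (hT.neg_mem hAf)
    hh.le (by positivity) (fun y => by
      simp only [Pi.neg_apply]
      linarith [(abs_le.1 (happrox h hh hhδ y)).1]) x

theorem apply_sub_le_integral (hT : IsSublinearMarkovSemigroup_s4 H T) (hf : f ∈ H) (hAf : Af ∈ H)
    (hgen : HasStrongGenerator T f Af) {t : ℝ} (ht : 0 ≤ t) (x : X) :
    T t f x - f x ≤ ∫ s in 0..t, T s Af x := by
  obtain ⟨C, hC⟩ := hT.bounded Af hAf
  simpa only [hT.zero_apply f hf] using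
    sub_le_integral_of_forall_sub_le_mul (F := fun s => T s f x) ht
      (fun s hs => hT.abs_apply_le hs hAf hC x)
      (hT.exists_apply_sub_le_apply_add hAf (hT.exists_le_apply_add hf hAf hgen hC) x)
      (hT.exists_apply_add_sub_apply_le hf hAf hgen x)

theorem neg_integral_le_apply_sub (hT : IsSublinearMarkovSemigroup_s4 H T) (hf : f ∈ H)
    (hAf : Af ∈ H) (hgen : HasStrongGenerator T f Af) {t : ℝ} (ht : 0 ≤ t) (x : X) :
    -(∫ s in 0..t, T s (-Af) x) ≤ T t f x - f x := by
  obtain ⟨C, hC⟩ := hT.bounded Af hAf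
  simpa only [hT.zero_apply f hf] using
    neg_integral_le_sub_of_forall_sub_le_mul (F := fun s => T s f x) ht
      (fun s hs => hT.abs_apply_le hs (hT.neg_mem hAf) (fun y => by simpa using hC y) x)
      (hT.exists_apply_sub_le_apply_add (hT.neg_mem hAf)
        (hT.exists_neg_le_apply_neg_add hf hAf hgen hC) x)
      (hT.exists_apply_sub_apply_add_le hf hAf hgen x)

end IsSublinearMarkovSemigroup_s4

/-- sublinear Dynkin formula: for `f` in the domain of the strong generator `A`
of a sublinear Markov semigroup: `-∫₀ᵗ T_s(-Af) ds ≤ T_t f - f ≤ ∫₀ᵗ T_s(Af) ds` pointwise. -/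
theorem sublinear_dynkin_formula
    {d : ℕ} (H : Set ((Fin d → ℝ) → ℝ))
    (T : ℝ → ((Fin d → ℝ) → ℝ) → ((Fin d → ℝ) → ℝ))
    (hbd : ∀ f ∈ H, ∃ C, ∀ x, |f x| ≤ C)
    (hconst : ∀ c : ℝ, (fun _ => c) ∈ H)
    (hcone : ∀ f ∈ H, ∀ g ∈ H, ∀ a b : ℝ, a • f + b • g ∈ H)
    (hmap : ∀ t, 0 ≤ t → ∀ f ∈ H, T t f ∈ H)
    (hsemi : ∀ t, 0 ≤ t → ∀ s, 0 ≤ s → ∀ f ∈ H, T (t + s) f = T t (T s f))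
    (hid : ∀ f ∈ H, T 0 f = f)
    (hsub : ∀ t, 0 ≤ t → ∀ f ∈ H, ∀ g ∈ H, ∀ x, T t (f + g) x ≤ T t f x + T t g x)
    (hhom : ∀ t, 0 ≤ t → ∀ f ∈ H, ∀ c : ℝ, 0 ≤ c → T t (c • f) = c • T t f)
    (hmono : ∀ t, 0 ≤ t → ∀ f ∈ H, ∀ g ∈ H, (∀ x, f x ≤ g x) → ∀ x, T t f x ≤ T t g x)
    (hone : ∀ t, 0 ≤ t → ∀ x, T t (fun _ => (1 : ℝ)) x ≤ 1)
    -- f is in the domain of the strong generator, with Af the strong (uniform) limit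
    (f : (Fin d → ℝ) → ℝ) (hf : f ∈ H) (Af : (Fin d → ℝ) → ℝ) (hAf : Af ∈ H)
    (hgen : ∀ ε > (0 : ℝ), ∃ δ > (0 : ℝ), ∀ s, 0 < s → s < δ →
      ∀ x, |(T s f x - f x) / s - Af x| ≤ ε) :
    ∀ t, 0 ≤ t → ∀ x,
      -(∫ s in (0 : ℝ)..t, T s (-Af) x) ≤ T t f x - f x ∧
      T t f x - f x ≤ ∫ s in (0 : ℝ)..t, T s Af x := by
  have hT : IsSublinearMarkovSemigroup_s4 H T :=
    ⟨hbd, hconst, hcone, hmap, hsemi, hid, hsub, hhom, hmono, hone⟩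
  intro t ht x
  exact ⟨hT.neg_integral_le_apply_sub hf hAf hgen ht x, hT.apply_sub_le_integral hf hAf hgen ht x⟩
end

section
/- For the sublinear Markov semigroup T_t f(x) := sup_{|s| ≤ t} f(x+s) on C_b^{uc}(R), every f ∈ C_b^2(R) (twice continuously differentiable with bounded f, f', f'') satisfies lim_{t↓0} ||(T_t f − f)/t − |f'| ||_∞ = 0; in particular C_b^2(R) is contained in the domain of the strong generator A and Af = |f'| for f ∈ C_b^2(R). -/
open Filter Topology

/-- The sublinear operator `T_t f(x) = sup_{|s| ≤ t} f(x+s)`. -/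
noncomputable def shiftSup (t : ℝ) (f : ℝ → ℝ) (x : ℝ) : ℝ :=
  sSup ((fun s => f (x + s)) '' Set.Icc (-t) t)

/-!
A bound `C` on `f''` makes `f'` `C`-Lipschitz, so `f (x + s) = f x + s f'(x) + O(C s²)` uniformly
in `x`. Over `|s| ≤ t` the linear part `f x + s f'(x)` has maximum `f x + t |f'(x)|`, attained at
`s = ± t`; hence `T_t f x = f x + t |f'(x)| + O(C t²)` uniformly in `x`, and dividing by `t`
gives the generator `|f'|` with uniform error `O(C t)`.
-/

open scoped NNReal

theorem abs_sub_sub_mul_deriv_le {f : ℝ → ℝ} (hf : Differentiable ℝ f) {C : ℝ≥0}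
    (hC : LipschitzWith C (deriv f)) (x s : ℝ) :
    |f (x + s) - f x - s * deriv f x| ≤ C * s ^ 2 := by
  set g : ℝ → ℝ := fun u => f (x + u) - u * deriv f x
  have hg : ∀ u, HasDerivAt g (deriv f (x + u) - deriv f x) u := fun u =>
    ((hf (x + u)).hasDerivAt.comp_const_add x u).sub (hasDerivAt_mul_const (deriv f x))
  have hg' : ∀ u ∈ Metric.closedBall (0 : ℝ) |s|, ‖deriv g u‖ ≤ C * |s| := fun u hu => by
    rw [(hg u).deriv]
    calc ‖deriv f (x + u) - deriv f x‖ ≤ C * ‖u‖ := by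
          simpa [← dist_eq_norm] using hC.dist_le_mul (x + u) x
      _ ≤ C * |s| := by gcongr; exact mem_closedBall_zero_iff.mp hu
  have := (convex_closedBall (0 : ℝ) |s|).norm_image_sub_le_of_norm_deriv_le
    (fun u _ => (hg u).differentiableAt) hg' (Metric.mem_closedBall_self (abs_nonneg s))
    (mem_closedBall_zero_iff.mpr le_rfl)
  simpa [g, sub_right_comm, mul_assoc, ← sq] using this

theorem abs_shiftSup_sub_le {f : ℝ → ℝ} {x d t K : ℝ} (ht : 0 ≤ t)
    (h : ∀ s ∈ Set.Icc (-t) t, |f (x + s) - f x - s * d| ≤ K) :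
    |shiftSup t f x - (f x + t * |d|)| ≤ K := by
  have hub : ∀ y ∈ (fun s => f (x + s)) '' Set.Icc (-t) t, y ≤ f x + t * |d| + K := by
    rintro _ ⟨s, hs, rfl⟩
    have : s * d ≤ t * |d| :=
      (le_abs_self _).trans (by rw [abs_mul]; gcongr; exact abs_le.mpr hs)
    linarith [(abs_le.mp (h s hs)).2]
  have hmem : ∀ s ∈ Set.Icc (-t) t, f (x + s) ≤ shiftSup t f x := fun s hs =>
    le_csSup ⟨_, hub⟩ (Set.mem_image_of_mem _ hs)
  have hupper : shiftSup t f x ≤ f x + t * |d| + K :=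
    csSup_le ((Set.nonempty_Icc.mpr (by linarith)).image _) hub
  have hlower : f x + t * |d| - K ≤ shiftSup t f x := by
    rcases le_or_gt 0 d with hd | hd
    · have hs : t ∈ Set.Icc (-t) t := ⟨by linarith, le_rfl⟩
      rw [abs_of_nonneg hd]
      linarith [(abs_le.mp (h t hs)).1, hmem t hs]
    · have hs : -t ∈ Set.Icc (-t) t := ⟨le_rfl, by linarith⟩
      rw [abs_of_neg hd]
      linarith [(abs_le.mp (h (-t) hs)).1, hmem (-t) hs]
  exact abs_le.mpr ⟨by linarith, by linarith⟩

theorem shiftSup_generator_on_Cb2_general (f : ℝ → ℝ)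
    (hf : ContDiff ℝ 2 f)
    (hb2 : ∃ C, ∀ x, |deriv (deriv f) x| ≤ C) :
    ∀ ε > (0 : ℝ), ∃ δ > (0 : ℝ), ∀ t, 0 < t → t < δ →
      ∀ x, |(shiftSup t f x - f x) / t - abs (deriv f x)| ≤ ε := by
  obtain ⟨C, hC⟩ := hb2
  lift C to ℝ≥0 using (abs_nonneg _).trans (hC 0)
  have hlip : LipschitzWith C (deriv f) :=
    lipschitzWith_of_nnnorm_deriv_le ((hf.iterate_deriv' 1 1).differentiable one_ne_zero)
      fun x => by simpa [← NNReal.coe_le_coe] using hC x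
  intro ε hε
  refine ⟨ε / (C + 1), by positivity, fun t ht htδ x => ?_⟩
  have hT : |shiftSup t f x - (f x + t * |deriv f x|)| ≤ C * t ^ 2 :=
    abs_shiftSup_sub_le ht.le fun s hs =>
      (abs_sub_sub_mul_deriv_le (hf.differentiable two_ne_zero) hlip x s).trans
        (mul_le_mul_of_nonneg_left (sq_le_sq' hs.1 hs.2) C.2)
  have hCt : C * t ≤ ε := by
    rw [lt_div_iff₀ (by positivity)] at htδ
    nlinarith
  calc |(shiftSup t f x - f x) / t - abs (deriv f x)|
      = |shiftSup t f x - (f x + t * |deriv f x|)| / t := by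
        rw [← abs_of_pos ht, ← abs_div, abs_of_pos ht]; congr 1; field_simp; ring
    _ ≤ C * t ^ 2 / t := by gcongr
    _ = C * t := by field_simp
    _ ≤ ε := hCt

/-- for the sublinear Markov semigroup `T_t f(x) = sup_{|s| ≤ t} f(x+s)` on
`C_b^{uc}(ℝ)`, every `f ∈ C_b²(ℝ)` satisfies `lim_{t↓0} ‖(T_t f - f)/t - |f'|‖_∞ = 0`;
in particular `C_b²(ℝ)` is contained in the domain of the strong generator `A` and
`Af = |f'|` there. -/
theorem shiftSup_generator_on_Cb2 (f : ℝ → ℝ)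
    (hf : ContDiff ℝ 2 f)
    (hb0 : ∃ C, ∀ x, |f x| ≤ C)
    (hb1 : ∃ C, ∀ x, |deriv f x| ≤ C)
    (hb2 : ∃ C, ∀ x, |deriv (deriv f) x| ≤ C) :
    ∀ ε > (0 : ℝ), ∃ δ > (0 : ℝ), ∀ t, 0 < t → t < δ →
      ∀ x, |(shiftSup t f x - f x) / t - abs (deriv f x)| ≤ ε :=
  shiftSup_generator_on_Cb2_general f hf hb2
end

section
/- Let D be a linear subspace of bounded real-valued functions on R^d, x_0 ∈ R^d, and B : D → R a sublinear functional (subadditive and positively homogeneous) satisfying the positive maximum principle at x_0: if f ∈ D and f(x_0) = sup_x f(x) ≥ 0 then Bf ≤ 0. Then there exists a family (B_θ)_{θ∈Θ} of linear functionals on D, each satisfying the positive maximum principle at x_0, such that Bf = sup_{θ∈Θ} B_θ f for all f ∈ D; moreover for each f ∈ D the supremum is attained at some θ = θ(f). -/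
/-!
The functionals in the family are all linear functionals dominated by `B`; they inherit the
positive maximum principle from `B`. For attainment at `f`, the functional `c • f ↦ c * B f` on
`span {f}` is dominated by `B` (for `c < 0` because `0 = B 0 ≤ B f + B (-f)`), so by Hahn–Banach
it extends to a linear functional dominated by `B` that takes the value `B f` at `f`.
-/

section Sublinear

variable {E : Type*} [AddCommGroup E] [Module ℝ E] {N : E → ℝ}

theorem sublinear_map_zero (hsmul : ∀ (x : E) (c : ℝ), 0 ≤ c → N (c • x) = c * N x) :
    N 0 = 0 := by
  simpa using hsmul 0 0 le_rfl

theorem mul_le_sublinear_smul (hadd : ∀ x y : E, N (x + y) ≤ N x + N y)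
    (hsmul : ∀ (x : E) (c : ℝ), 0 ≤ c → N (c • x) = c * N x) (x : E) (c : ℝ) :
    c * N x ≤ N (c • x) := by
  rcases le_or_gt 0 c with hc | hc
  · exact (hsmul x c hc).ge
  · have hneg : 0 ≤ N x + N (-x) := by
      simpa [sublinear_map_zero hsmul] using hadd x (-x)
    have hflip : N (c • x) = -c * N (-x) := by
      rw [← hsmul (-x) (-c) (neg_nonneg.mpr hc.le), neg_smul_neg]
    nlinarith

theorem exists_linearMap_le_sublinear_eq (hadd : ∀ x y : E, N (x + y) ≤ N x + N y)
    (hsmul : ∀ (x : E) (c : ℝ), 0 ≤ c → N (c • x) = c * N x) (x : E) :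
    ∃ g : E →ₗ[ℝ] ℝ, (∀ y, g y ≤ N y) ∧ g x = N x := by
  have hker : ∀ c : ℝ, c • x = 0 → RingHom.id ℝ c • N x = 0 := by
    intro c hcx
    rcases smul_eq_zero.mp hcx with rfl | rfl
    · rw [map_zero, zero_smul]
    · rw [sublinear_map_zero hsmul, smul_zero]
  let f := LinearPMap.mkSpanSingleton' x (N x) hker
  have hf : ∀ y : f.domain, f y ≤ N y := by
    rintro ⟨y, hy⟩
    obtain ⟨c, rfl⟩ := Submodule.mem_span_singleton.mp hy
    rw [LinearPMap.mkSpanSingleton'_apply, RingHom.id_apply, smul_eq_mul]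
    exact mul_le_sublinear_smul hadd hsmul x c
  obtain ⟨g, hgf, hgN⟩ := exists_extension_of_le_sublinear f N
    (fun c hc y => hsmul y c hc.le) hadd hf
  refine ⟨g, hgN, ?_⟩
  exact (hgf ⟨x, Submodule.mem_span_singleton_self x⟩).trans
    (LinearPMap.mkSpanSingleton'_apply_self _ _ _ _)

end Sublinear

theorem sublinear_functional_representation_general
    {d : ℕ} (D : Submodule ℝ ((Fin d → ℝ) → ℝ))
    (x₀ : Fin d → ℝ) (B : ↥D → ℝ)
    (hsub : ∀ f g : ↥D, B (f + g) ≤ B f + B g)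
    (hhom : ∀ (f : ↥D) (c : ℝ), 0 ≤ c → B (c • f) = c * B f)
    (hpmp : ∀ f : ↥D, (∀ x, (f : (Fin d → ℝ) → ℝ) x ≤ (f : (Fin d → ℝ) → ℝ) x₀) →
      0 ≤ (f : (Fin d → ℝ) → ℝ) x₀ → B f ≤ 0) :
    ∃ (Θ : Type) (Bθ : Θ → (↥D →ₗ[ℝ] ℝ)),
      (∀ θ, ∀ f : ↥D, (∀ x, (f : (Fin d → ℝ) → ℝ) x ≤ (f : (Fin d → ℝ) → ℝ) x₀) →
        0 ≤ (f : (Fin d → ℝ) → ℝ) x₀ → Bθ θ f ≤ 0) ∧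
      (∀ f : ↥D, (∀ θ, Bθ θ f ≤ B f) ∧ ∃ θ, Bθ θ f = B f) := by
  refine ⟨{L : ↥D →ₗ[ℝ] ℝ // ∀ g, L g ≤ B g}, Subtype.val, ?_, fun f => ⟨fun θ => θ.2 f, ?_⟩⟩
  · exact fun θ f hmax hnonneg => (θ.2 f).trans (hpmp f hmax hnonneg)
  · obtain ⟨g, hgB, hgf⟩ := exists_linearMap_le_sublinear_eq hsub hhom f
    exact ⟨⟨g, hgB⟩, hgf⟩

/-- a sublinear functional `B` on a linear space `D` of bounded functions,
satisfying the positive maximum principle at `x₀`, is the (attained) supremum of a family of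
linear functionals each satisfying the positive maximum principle at `x₀`. -/
theorem sublinear_functional_representation
    {d : ℕ} (D : Submodule ℝ ((Fin d → ℝ) → ℝ))
    (hbd : ∀ f ∈ D, ∃ C, ∀ x, |f x| ≤ C)
    (x₀ : Fin d → ℝ) (B : ↥D → ℝ)
    (hsub : ∀ f g : ↥D, B (f + g) ≤ B f + B g)
    (hhom : ∀ (f : ↥D) (c : ℝ), 0 ≤ c → B (c • f) = c * B f)
    (hpmp : ∀ f : ↥D, (∀ x, (f : (Fin d → ℝ) → ℝ) x ≤ (f : (Fin d → ℝ) → ℝ) x₀) →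
      0 ≤ (f : (Fin d → ℝ) → ℝ) x₀ → B f ≤ 0) :
    ∃ (Θ : Type) (Bθ : Θ → (↥D →ₗ[ℝ] ℝ)),
      (∀ θ, ∀ f : ↥D, (∀ x, (f : (Fin d → ℝ) → ℝ) x ≤ (f : (Fin d → ℝ) → ℝ) x₀) →
        0 ≤ (f : (Fin d → ℝ) → ℝ) x₀ → Bθ θ f ≤ 0) ∧
      (∀ f : ↥D, (∀ θ, Bθ θ f ≤ B f) ∧ ∃ θ, Bθ θ f = B f) :=
  sublinear_functional_representation_general D x₀ B hsub hhom hpmp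
end
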